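/- Let q : (G,𝒫) → (H,𝒬) be an (L,C,M)-quasi-isometry of group pairs and let q̇ : G/𝒫 → H/𝒬 be any map with Hdist_H(q̇(A), q(A)) ≤ M for all A ∈ G/𝒫. Let g_iP_i ∈ G/𝒫 and h_iQ_i = q̇(g_iP_i) for i = 1, …, k. Then the subgroup ⋂_{i=1}^k g_iP_ig_i⁻¹ is infinite if and only if the subgroup ⋂_{i=1}^k h_iQ_ih_i⁻¹ is infinite. -/

import Mathlib

open scoped Pointwise ENNReal NNReal

namespace CIC

variable {G : Type*} [Group G] {H : Type*} [Group H]

/-- Word length of `g` with respect to the generating set `S`: the least `n` such that `g`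
is a product of `n` elements of `S ∪ S⁻¹`. -/
noncomputable def wordLength (S : Set G) (g : G) : ℕ :=
  sInf {n | ∃ l : List G, (∀ x ∈ l, x ∈ S ∨ x⁻¹ ∈ S) ∧ l.length = n ∧ l.prod = g}

/-- The word metric on `G` associated to the generating set `S`. -/
noncomputable def wdist (S : Set G) (g h : G) : ℕ := wordLength S (g⁻¹ * h)

/-- Closed `r`-neighborhood of `A` with respect to the word metric of `S`. -/
def nbhd (S : Set G) (r : ℝ) (A : Set G) : Set G :=
  {x | ∃ a ∈ A, (wdist S a x : ℝ) ≤ r}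

/-- Hausdorff distance between subsets of `G`, valued in `[0,∞]`: the infimum of those
`r ≥ 0` such that each set is contained in the closed `r`-neighborhood of the other,
the infimum of the empty set being `∞`. -/
noncomputable def hdist (S : Set G) (A B : Set G) : ℝ≥0∞ :=
  ⨅ (r : ℝ≥0) (_ : A ⊆ nbhd S (r : ℝ) B ∧ B ⊆ nbhd S (r : ℝ) A), (r : ℝ≥0∞)

/-- The conjugate subgroup `g P g⁻¹`. -/
def conj (g : G) (P : Subgroup G) : Subgroup G := P.map (MulAut.conj g).toMonoidHom

/-- The set `G/𝒫` of all left cosets `gP` with `g ∈ G` and `P ∈ 𝒫`. -/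
def cosets (Ps : Finset (Subgroup G)) : Set (Set G) :=
  {A | ∃ (g : G) (P : Subgroup G), P ∈ Ps ∧ A = g • (P : Set G)}

/-- A group pair `(G, 𝒫)`: `S` is a finite generating set of `G` and `𝒫` is a finite
collection of infinite subgroups of `G`. -/
structure IsGroupPair (S : Finset G) (Ps : Finset (Subgroup G)) : Prop where
  generates : Subgroup.closure (S : Set G) = ⊤
  infinite : ∀ P ∈ Ps, (P : Set G).Infinite

/-- An `(L,C,M)`-quasi-isometry of group pairs `q : (G,𝒫) → (H,𝒬)`. -/
structure IsPairQI (S : Finset G) (T : Finset H)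
    (Ps : Finset (Subgroup G)) (Qs : Finset (Subgroup H))
    (L C M : ℝ≥0) (q : G → H) : Prop where
  one_le : 1 ≤ L
  lower : ∀ a b : G, (wdist (S : Set G) a b : ℝ) / L - C ≤ (wdist (T : Set H) (q a) (q b) : ℝ)
  upper : ∀ a b : G, (wdist (T : Set H) (q a) (q b) : ℝ) ≤ L * (wdist (S : Set G) a b : ℝ) + C
  dense : ∀ y : H, ∃ x : G, (wdist (T : Set H) (q x) y : ℝ) ≤ C
  coset_fwd : ∀ A ∈ cosets Ps, ∃ B ∈ cosets Qs, hdist (T : Set H) (q '' A) B < (M : ℝ≥0∞)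
  coset_bwd : ∀ B ∈ cosets Qs, ∃ A ∈ cosets Ps, hdist (T : Set H) (q '' A) B < (M : ℝ≥0∞)

/-! In a finitely generated group the subgroup `⋂ᵢ gᵢPᵢgᵢ⁻¹` is infinite iff, for some `r`, the
`r`-neighbourhoods of the cosets `gᵢPᵢ` have infinite intersection. Indeed, if `Y` lies in all
these neighbourhoods, pick for `x ∈ Y` points `aᵢ(x) ∈ gᵢPᵢ` within distance `r`; the displacements
`aᵢ(x)⁻¹x` take finitely many values, and two points `x, y` with the same displacements satisfy
`xy⁻¹ = aᵢ(x)aᵢ(y)⁻¹ ∈ gᵢPᵢgᵢ⁻¹`, so `Y` is covered by finitely many right translates of the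
intersection. This coarse condition is invariant under a quasi-isometry that moves each coset
within bounded Hausdorff distance of the corresponding one. -/

section WordMetric

variable {S : Set G}

lemma exists_list_prod_eq (hS : Subgroup.closure S = ⊤) (g : G) :
    ∃ l : List G, (∀ x ∈ l, x ∈ S ∨ x⁻¹ ∈ S) ∧ l.prod = g := by
  have hg : g ∈ Submonoid.closure (S ∪ S⁻¹) := by
    rw [← Subgroup.closure_toSubmonoid, hS]
    trivial
  exact Submonoid.exists_list_of_mem_closure hg

lemma exists_list_length_eq_wordLength (hS : Subgroup.closure S = ⊤) (g : G) :
    ∃ l : List G, (∀ x ∈ l, x ∈ S ∨ x⁻¹ ∈ S) ∧ l.length = wordLength S g ∧ l.prod = g := by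
  obtain ⟨l, hl, hprod⟩ := exists_list_prod_eq hS g
  exact Nat.sInf_mem
    (s := {n | ∃ l : List G, (∀ x ∈ l, x ∈ S ∨ x⁻¹ ∈ S) ∧ l.length = n ∧ l.prod = g})
    ⟨l.length, l, hl, rfl, hprod⟩

lemma wordLength_prod_le {l : List G} (hl : ∀ x ∈ l, x ∈ S ∨ x⁻¹ ∈ S) :
    wordLength S l.prod ≤ l.length :=
  Nat.sInf_le ⟨l, hl, rfl, rfl⟩

lemma wordLength_one : wordLength S (1 : G) = 0 :=
  Nat.le_zero.mp (wordLength_prod_le (l := []) (by simp))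

lemma wordLength_mul_le (hS : Subgroup.closure S = ⊤) (a b : G) :
    wordLength S (a * b) ≤ wordLength S a + wordLength S b := by
  obtain ⟨l₁, hl₁, hlen₁, rfl⟩ := exists_list_length_eq_wordLength hS a
  obtain ⟨l₂, hl₂, hlen₂, rfl⟩ := exists_list_length_eq_wordLength hS b
  have hl : ∀ x ∈ l₁ ++ l₂, x ∈ S ∨ x⁻¹ ∈ S := by
    simpa only [List.mem_append, or_imp, forall_and] using And.intro hl₁ hl₂
  simpa only [List.prod_append, List.length_append, hlen₁, hlen₂] using wordLength_prod_le hl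

lemma wordLength_inv_le (hS : Subgroup.closure S = ⊤) (g : G) :
    wordLength S g⁻¹ ≤ wordLength S g := by
  obtain ⟨l, hl, hlen, rfl⟩ := exists_list_length_eq_wordLength hS g
  have hl' : ∀ x ∈ (l.map (·⁻¹)).reverse, x ∈ S ∨ x⁻¹ ∈ S := by
    intro x hx
    obtain ⟨y, hy, rfl⟩ := List.mem_map.mp (List.mem_reverse.mp hx)
    simpa [or_comm] using hl y hy
  simpa [← List.prod_inv_reverse, hlen] using wordLength_prod_le hl'

lemma wdist_self (a : G) : wdist S a a = 0 := by
  simp [wdist, wordLength_one]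

lemma wdist_comm (hS : Subgroup.closure S = ⊤) (a b : G) : wdist S a b = wdist S b a := by
  have hinv : ∀ x y : G, wdist S x y ≤ wdist S y x := fun x y => by
    simpa [wdist] using wordLength_inv_le hS (y⁻¹ * x)
  exact le_antisymm (hinv a b) (hinv b a)

lemma wdist_triangle (hS : Subgroup.closure S = ⊤) (a b c : G) :
    wdist S a c ≤ wdist S a b + wdist S b c := by
  simpa [wdist, mul_assoc] using wordLength_mul_le hS (a⁻¹ * b) (b⁻¹ * c)

lemma finite_setOf_wordLength_le (hSfin : S.Finite) (hS : Subgroup.closure S = ⊤) (r : ℝ) :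
    {g : G | (wordLength S g : ℝ) ≤ r}.Finite := by
  have : Finite ↥(S ∪ S⁻¹) := (hSfin.union hSfin.inv).to_subtype
  refine ((List.finite_length_le ↥(S ∪ S⁻¹) ⌊r⌋₊).image fun l => (l.map (↑)).prod).subset ?_
  intro g (hg : (wordLength S g : ℝ) ≤ r)
  obtain ⟨l, hl, hlen, rfl⟩ := exists_list_length_eq_wordLength hS g
  rw [← hlen] at hg
  lift l to List ↥(S ∪ S⁻¹) using hl
  exact ⟨l, by simpa using Nat.le_floor hg, rfl⟩

lemma finite_setOf_wdist_le (hSfin : S.Finite) (hS : Subgroup.closure S = ⊤) (a : G) (r : ℝ) :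
    {x : G | (wdist S a x : ℝ) ≤ r}.Finite :=
  ((finite_setOf_wordLength_le hSfin hS r).image (a * ·)).subset fun x hx =>
    ⟨a⁻¹ * x, hx, mul_inv_cancel_left a x⟩

lemma nbhd_mono {r r' : ℝ} {A B : Set G} (hr : r ≤ r') (hAB : A ⊆ B) :
    nbhd S r A ⊆ nbhd S r' B := fun _ ⟨a, ha, hd⟩ => ⟨a, hAB ha, hd.trans hr⟩

lemma subset_nbhd {r : ℝ} (hr : 0 ≤ r) (A : Set G) : A ⊆ nbhd S r A :=
  fun a ha => ⟨a, ha, by simpa [wdist_self] using hr⟩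

lemma nbhd_nbhd_subset (hS : Subgroup.closure S = ⊤) (r s : ℝ) (A : Set G) :
    nbhd S r (nbhd S s A) ⊆ nbhd S (s + r) A := by
  rintro x ⟨b, ⟨a, ha, hab⟩, hbx⟩
  refine ⟨a, ha, ?_⟩
  have : (wdist S a x : ℝ) ≤ wdist S a b + wdist S b x := by
    exact_mod_cast wdist_triangle hS a b x
  linarith

lemma finite_nbhd (hSfin : S.Finite) (hS : Subgroup.closure S = ⊤) {A : Set G} (hA : A.Finite)
    (r : ℝ) : (nbhd S r A).Finite :=
  (hA.biUnion fun a _ => finite_setOf_wdist_le hSfin hS a r).subset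
    fun _ ⟨_, ha, hd⟩ => Set.mem_biUnion ha hd

lemma subset_nbhd_of_hdist_le {A B : Set G} {M : ℝ≥0} (h : hdist S A B ≤ M) :
    A ⊆ nbhd S (M + 1) B ∧ B ⊆ nbhd S (M + 1) A := by
  have hlt : hdist S A B < ((M + 1 : ℝ≥0) : ℝ≥0∞) :=
    h.trans_lt (by exact_mod_cast lt_add_one M)
  simp only [hdist, iInf_lt_iff, ENNReal.coe_lt_coe] at hlt
  obtain ⟨r, ⟨hAB, hBA⟩, hr⟩ := hlt
  have hr' : (r : ℝ) ≤ M + 1 := by exact_mod_cast hr.le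
  exact ⟨hAB.trans (nbhd_mono hr' le_rfl), hBA.trans (nbhd_mono hr' le_rfl)⟩

end WordMetric

section CoarseIntersection

variable {ι : Type*} {S : Set G}

def HasInfiniteCoarseIntersection (S : Set G) (A : ι → Set G) : Prop :=
  ∃ r : ℝ, (⋂ i, nbhd S r (A i)).Infinite

lemma mem_conj {g x : G} {P : Subgroup G} : x ∈ conj g P ↔ ∃ p ∈ P, g * p * g⁻¹ = x := by
  simp [conj, Subgroup.mem_map, MulAut.conj_apply]

lemma conj_subset_nbhd (g : G) (P : Subgroup G) :
    (conj g P : Set G) ⊆ nbhd S (wordLength S g⁻¹) (g • (P : Set G)) := by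
  intro x hx
  obtain ⟨p, hp, rfl⟩ := mem_conj.mp hx
  refine ⟨g * p, ⟨p, hp, rfl⟩, le_of_eq ?_⟩
  simp [wdist, mul_assoc]

lemma mul_inv_mem_conj_of_inv_mul_eq {g a b x y : G} {P : Subgroup G}
    (ha : a ∈ g • (P : Set G)) (hb : b ∈ g • (P : Set G)) (h : a⁻¹ * x = b⁻¹ * y) :
    x * y⁻¹ ∈ conj g P := by
  obtain ⟨p, hp, rfl⟩ := ha
  obtain ⟨p', hp', rfl⟩ := hb
  simp only [smul_eq_mul] at h
  refine mem_conj.mpr ⟨p * p'⁻¹, mul_mem hp (inv_mem hp'), ?_⟩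
  have hx : x = g * p * ((g * p')⁻¹ * y) := by
    rw [← h]
    group
  rw [hx]
  group

lemma finite_iInter_nbhd_of_finite_iInf_conj [Finite ι] (hSfin : S.Finite)
    (hS : Subgroup.closure S = ⊤) (g : ι → G) (P : ι → Subgroup G)
    (hK : ((⨅ i, conj (g i) (P i) : Subgroup G) : Set G).Finite) (r : ℝ) :
    (⋂ i, nbhd S r (g i • (P i : Set G))).Finite := by
  set Y := ⋂ i, nbhd S r (g i • (P i : Set G))
  have hnear : ∀ x ∈ Y, ∀ i, ∃ a ∈ g i • (P i : Set G), (wdist S a x : ℝ) ≤ r :=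
    fun x hx => Set.mem_iInter.mp hx
  choose! a ha hax using hnear
  let displacement : G → ι → G := fun x i => (a x i)⁻¹ * x
  refine Set.Finite.of_finite_fibers displacement ?_ ?_
  · refine (Set.Finite.pi fun _ => finite_setOf_wordLength_le hSfin hS r).subset ?_
    rintro _ ⟨x, hx, rfl⟩ i -
    exact hax x hx i
  · rintro _ ⟨y, hy, rfl⟩
    refine (hK.image (· * y)).subset ?_
    rintro x ⟨hx, hxy⟩
    refine ⟨x * y⁻¹, ?_, inv_mul_cancel_right x y⟩
    simp only [SetLike.mem_coe, Subgroup.mem_iInf]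
    exact fun i => mul_inv_mem_conj_of_inv_mul_eq (ha x hx i) (ha y hy i) (congrFun hxy i)

lemma infinite_iInf_conj_iff [Finite ι] (hSfin : S.Finite) (hS : Subgroup.closure S = ⊤)
    (g : ι → G) (P : ι → Subgroup G) :
    ((⨅ i, conj (g i) (P i) : Subgroup G) : Set G).Infinite ↔
      HasInfiniteCoarseIntersection S fun i => g i • (P i : Set G) := by
  refine ⟨fun hK => ?_, fun ⟨r, hY⟩ hK =>
    hY (finite_iInter_nbhd_of_finite_iInf_conj hSfin hS g P hK r)⟩
  obtain ⟨N, hN⟩ := (Set.finite_range fun i => (wordLength S (g i)⁻¹ : ℝ)).bddAbove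
  refine ⟨N, hK.mono fun x hx => Set.mem_iInter.mpr fun i => ?_⟩
  have hxi : x ∈ conj (g i) (P i) := Subgroup.mem_iInf.mp hx i
  exact nbhd_mono (hN ⟨i, rfl⟩) le_rfl (conj_subset_nbhd (g i) (P i) hxi)

end CoarseIntersection

structure IsQuasiIsometry (S : Set G) (T : Set H) (L C : ℝ≥0) (q : G → H) : Prop where
  one_le : 1 ≤ L
  lower : ∀ a b : G, (wdist S a b : ℝ) / L - C ≤ (wdist T (q a) (q b) : ℝ)
  upper : ∀ a b : G, (wdist T (q a) (q b) : ℝ) ≤ L * (wdist S a b : ℝ) + C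
  dense : ∀ y : H, ∃ x : G, (wdist T (q x) y : ℝ) ≤ C

lemma IsPairQI.isQuasiIsometry {S : Finset G} {T : Finset H} {Ps : Finset (Subgroup G)}
    {Qs : Finset (Subgroup H)} {L C M : ℝ≥0} {q : G → H} (hq : IsPairQI S T Ps Qs L C M q) :
    IsQuasiIsometry (S : Set G) (T : Set H) L C q :=
  ⟨hq.one_le, hq.lower, hq.upper, hq.dense⟩

namespace IsQuasiIsometry

variable {S : Set G} {T : Set H} {L C : ℝ≥0} {q : G → H}

lemma wdist_le (hq : IsQuasiIsometry S T L C q) (a b : G) :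
    (wdist S a b : ℝ) ≤ L * (wdist T (q a) (q b) + C) := by
  have hL : (0 : ℝ) < L := zero_lt_one.trans_le (by exact_mod_cast hq.one_le)
  have := hq.lower a b
  rw [div_sub' hL.ne', div_le_iff₀ hL] at this
  linarith

lemma image_nbhd_subset (hq : IsQuasiIsometry S T L C q) (r : ℝ) (A : Set G) :
    q '' nbhd S r A ⊆ nbhd T (L * r + C) (q '' A) := by
  rintro _ ⟨x, ⟨a, ha, hax⟩, rfl⟩
  refine ⟨q a, ⟨a, ha, rfl⟩, (hq.upper a x).trans ?_⟩
  gcongr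

lemma preimage_nbhd_image_subset (hq : IsQuasiIsometry S T L C q) (s : ℝ) (A : Set G) :
    q ⁻¹' nbhd T s (q '' A) ⊆ nbhd S (L * (s + C)) A := by
  rintro x ⟨_, ⟨a, ha, rfl⟩, hax⟩
  refine ⟨a, ha, (hq.wdist_le a x).trans ?_⟩
  gcongr

lemma finite_of_finite_image (hq : IsQuasiIsometry S T L C q) (hSfin : S.Finite)
    (hS : Subgroup.closure S = ⊤) {Y : Set G} (hY : (q '' Y).Finite) : Y.Finite := by
  refine Set.Finite.of_finite_fibers q hY fun _ ⟨x₀, _, hx₀⟩ => ?_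
  refine (finite_setOf_wdist_le hSfin hS x₀ (L * (0 + C))).subset fun x ⟨_, hx⟩ => ?_
  have hqx : q x ∈ nbhd T 0 (q '' {x₀}) :=
    subset_nbhd le_rfl _ ⟨x₀, rfl, hx₀.trans hx.symm⟩
  obtain ⟨_, rfl, hd⟩ := hq.preimage_nbhd_image_subset 0 {x₀} hqx
  exact hd

variable {ι : Type*} {A : ι → Set G} {B : ι → Set H} {M : ℝ≥0}

lemma hasInfiniteCoarseIntersection_of_source (hq : IsQuasiIsometry S T L C q)
    (hSfin : S.Finite) (hS : Subgroup.closure S = ⊤) (hT : Subgroup.closure T = ⊤)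
    (hAB : ∀ i, hdist T (q '' A i) (B i) ≤ M) (hA : HasInfiniteCoarseIntersection S A) :
    HasInfiniteCoarseIntersection T B := by
  obtain ⟨r, hY⟩ := hA
  refine ⟨M + 1 + (L * r + C), fun hfin => hY (hq.finite_of_finite_image hSfin hS (hfin.subset ?_))⟩
  rintro _ ⟨x, hx, rfl⟩
  refine Set.mem_iInter.mpr fun i => nbhd_nbhd_subset hT _ _ _ ?_
  exact nbhd_mono le_rfl (subset_nbhd_of_hdist_le (hAB i)).1
    (hq.image_nbhd_subset r (A i) ⟨x, Set.mem_iInter.mp hx i, rfl⟩)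

lemma hasInfiniteCoarseIntersection_of_target (hq : IsQuasiIsometry S T L C q)
    (hTfin : T.Finite) (hT : Subgroup.closure T = ⊤) (hAB : ∀ i, hdist T (q '' A i) (B i) ≤ M)
    (hB : HasInfiniteCoarseIntersection T B) : HasInfiniteCoarseIntersection S A := by
  obtain ⟨r, hY⟩ := hB
  choose p hp using hq.dense
  refine ⟨L * (M + 1 + r + C + C), fun hfin => hY ?_⟩
  have hpY : p '' (⋂ i, nbhd T r (B i)) ⊆ ⋂ i, nbhd S (L * (M + 1 + r + C + C)) (A i) := by
    rintro _ ⟨y, hy, rfl⟩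
    refine Set.mem_iInter.mpr fun i => hq.preimage_nbhd_image_subset _ (A i) ?_
    have hyA : y ∈ nbhd T (M + 1 + r) (q '' A i) := nbhd_nbhd_subset hT _ _ _
      (nbhd_mono le_rfl (subset_nbhd_of_hdist_le (hAB i)).2 (Set.mem_iInter.mp hy i))
    exact nbhd_nbhd_subset hT _ _ _ ⟨y, hyA, by rw [wdist_comm hT]; exact hp y⟩
  refine (finite_nbhd hTfin hT ((hfin.subset hpY).image q) C).subset fun y hy => ?_
  exact ⟨q (p y), ⟨p y, ⟨y, hy, rfl⟩, rfl⟩, hp y⟩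

lemma hasInfiniteCoarseIntersection_iff (hq : IsQuasiIsometry S T L C q) (hSfin : S.Finite)
    (hS : Subgroup.closure S = ⊤) (hTfin : T.Finite) (hT : Subgroup.closure T = ⊤)
    (hAB : ∀ i, hdist T (q '' A i) (B i) ≤ M) :
    HasInfiniteCoarseIntersection S A ↔ HasInfiniteCoarseIntersection T B :=
  ⟨hq.hasInfiniteCoarseIntersection_of_source hSfin hS hT hAB,
    hq.hasInfiniteCoarseIntersection_of_target hTfin hT hAB⟩

end IsQuasiIsometry

theorem statement10_general (S : Finset G) (T : Finset H)
    (Ps : Finset (Subgroup G)) (Qs : Finset (Subgroup H))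
    (hG : IsGroupPair S Ps) (hH : IsGroupPair T Qs)
    (L C M : ℝ≥0) (q : G → H) (hq : IsPairQI S T Ps Qs L C M q)
    (k : ℕ) (g : Fin k → G) (P : Fin k → Subgroup G)
    (h : Fin k → H) (Q : Fin k → Subgroup H)
    (hqdot : ∀ i, hdist (T : Set H) (q '' (g i • (P i : Set G))) (h i • (Q i : Set H)) ≤
      (M : ℝ≥0∞)) :
    ((⨅ i, conj (g i) (P i) : Subgroup G) : Set G).Infinite ↔
      ((⨅ i, conj (h i) (Q i) : Subgroup H) : Set H).Infinite := by
  rw [infinite_iInf_conj_iff S.finite_toSet hG.generates,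
    infinite_iInf_conj_iff T.finite_toSet hH.generates]
  exact hq.isQuasiIsometry.hasInfiniteCoarseIntersection_iff S.finite_toSet hG.generates
    T.finite_toSet hH.generates hqdot

/-- Let `q : (G,𝒫) → (H,𝒬)` be a quasi-isometry of group pairs, and let `hᵢQᵢ = q̇(gᵢPᵢ)`,
i.e. `Hdist(q(gᵢPᵢ), hᵢQᵢ) ≤ M`. Then `⋂ᵢ gᵢPᵢgᵢ⁻¹` is infinite iff `⋂ᵢ hᵢQᵢhᵢ⁻¹` is
infinite. -/
theorem statement10 (S : Finset G) (T : Finset H)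
    (Ps : Finset (Subgroup G)) (Qs : Finset (Subgroup H))
    (hG : IsGroupPair S Ps) (hH : IsGroupPair T Qs)
    (L C M : ℝ≥0) (q : G → H) (hq : IsPairQI S T Ps Qs L C M q)
    (k : ℕ) (g : Fin k → G) (P : Fin k → Subgroup G)
    (h : Fin k → H) (Q : Fin k → Subgroup H)
    (hP : ∀ i, P i ∈ Ps) (hQ : ∀ i, Q i ∈ Qs)
    (hqdot : ∀ i, hdist (T : Set H) (q '' (g i • (P i : Set G))) (h i • (Q i : Set H)) ≤
      (M : ℝ≥0∞)) :
    ((⨅ i, conj (g i) (P i) : Subgroup G) : Set G).Infinite ↔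
      ((⨅ i, conj (h i) (Q i) : Subgroup H) : Set H).Infinite :=
  statement10_general S T Ps Qs hG hH L C M q hq k g P h Q hqdot

end CIC
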